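/- Let H : {0,1} → Z, W : {0,1} → Y₁, and Q : {0,1} → Y₂ be binary-input discrete memoryless channels, and suppose H is degraded with respect to W (H ≼ W). Then the second split channel of H and Q is degraded with respect to the second split channel of W and Q: H ⊛ Q ≼ W ⊛ Q, where (W ⊛ Q)((y₁,y₂,u₁)|u₂) = (1/2) W(y₁|u₁⊕u₂) Q(y₂|u₂). -/
import Mathlib


open scoped BigOperators

/-- `W : {0,1} → Y` (with `W x y` denoting `W(y|x)`) is a valid binary-input
discrete memoryless channel: nonnegative transition probabilities summing to
one for each input. -/
def IsChannel {Y : Type*} [Fintype Y] (W : Bool → Y → ℝ) : Prop :=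
  (∀ x y, 0 ≤ W x y) ∧ ∀ x, ∑ y : Y, W x y = 1

/-- `H ≼ W`: the channel `H : {0,1} → Z` is (stochastically) degraded with
respect to `W : {0,1} → Y`, i.e. there is an intermediate channel
`P : Y → Z` with `H(z|x) = ∑_y W(y|x) P(z|y)`. -/
def Degraded {Y Z : Type*} [Fintype Y] [Fintype Z]
    (H : Bool → Z → ℝ) (W : Bool → Y → ℝ) : Prop :=
  ∃ P : Y → Z → ℝ, (∀ y z, 0 ≤ P y z) ∧ (∀ y, ∑ z : Z, P y z = 1) ∧
    ∀ x z, H x z = ∑ y : Y, W x y * P y z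

/-- The second split channel of the general one-step polar transform:
`(W ⊛ Q)((y₁,y₂,u₁)|u₂) = (1/2) W(y₁|u₁⊕u₂) Q(y₂|u₂)`. -/
noncomputable def split2 {Y₁ Y₂ : Type*}
    (W : Bool → Y₁ → ℝ) (Q : Bool → Y₂ → ℝ) :
    Bool → (Y₁ × Y₂ × Bool) → ℝ :=
  fun u₂ y => (1 / 2) * W (xor y.2.2 u₂) y.1 * Q u₂ y.2.1

/-- if `H ≼ W`, then `H ⊛ Q ≼ W ⊛ Q`. -/
theorem split2_degraded_left {Y₁ Y₂ Z : Type*}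
    [Fintype Y₁] [Fintype Y₂] [Fintype Z]
    (H : Bool → Z → ℝ) (W : Bool → Y₁ → ℝ) (Q : Bool → Y₂ → ℝ)
    (hH : IsChannel H) (hW : IsChannel W) (hQ : IsChannel Q)
    (hdeg : Degraded H W) :
    Degraded (split2 H Q) (split2 W Q) := by
  classical
  obtain ⟨P, hPnn, hPsum, hPeq⟩ := hdeg
  refine ⟨fun y w => P y.1 w.1 * (if w.2.1 = y.2.1 then 1 else 0) *
      (if w.2.2 = y.2.2 then 1 else 0), ?_, ?_, ?_⟩
  · intro y w
    have := hPnn y.1 w.1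
    positivity
  · intro y
    simp [Fintype.sum_prod_type, Finset.sum_ite_eq', hPsum y.1]
  · intro u₂ w
    simp only [Fintype.sum_prod_type, split2, Fintype.sum_bool, mul_ite, mul_one, mul_zero,
      Finset.sum_ite_eq', Finset.mem_univ, if_true]
    have key : ∀ b : Bool, (1:ℝ)/2 * H (xor b u₂) w.1 * Q u₂ w.2.1
        = ∑ y₁ : Y₁, 1/2 * W (xor b u₂) y₁ * Q u₂ w.2.1 * P y₁ w.1 := by
      intro b
      rw [hPeq, Finset.mul_sum, Finset.sum_mul]
      exact Finset.sum_congr rfl fun y₁ _ => by ring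
    cases hw : w.2.2
    · simpa using key false
    · simpa using key true
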